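/- Let V be a valuation domain, M a V-module with pd M ≤ 1, and A, B tight submodules of M. Consider the conditions: (i) A ∩ B is tight in A; (ii) A ∩ B is tight in B; (iii) A is tight in A + B; (iv) B is tight in A + B; (v) A ∩ B is tight in M; (vi) A ∩ B is tight in A + B; (vii) A + B is tight in M. Then conditions (i)–(v) are pairwise equivalent, each of (i)–(v) implies (vi), and (vii) implies each of (i)–(v). -/

import Mathlib

universe u v

open Pointwise

def PdLeOne (V : Type u) [CommRing V] (M : Type v) [AddCommGroup M] [Module V M] : Prop :=
  ∃ (P : Type (max u v)) (_ : AddCommGroup P) (_ : Module V P) (f : P →ₗ[V] M),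
    Module.Projective V P ∧ Function.Surjective f ∧ Module.Projective V (LinearMap.ker f)

def Tight (V : Type u) [CommRing V] {M : Type v} [AddCommGroup M] [Module V M]
    (N : Submodule V M) : Prop :=
  PdLeOne V (M ⧸ N)

/-- `B` tight in `A`, for submodules `B ≤ A` of an ambient module. -/
def TightIn (V : Type u) [CommRing V] {M : Type v} [AddCommGroup M] [Module V M]
    (B A : Submodule V M) : Prop :=
  Tight V (Submodule.comap A.subtype B)

section Abstract

variable {V : Type u} [CommRing V]

/-- A module in the middle of a SES with projective ends is projective. -/
theorem projective_of_ses {X Y Z : Type*} [AddCommGroup X] [Module V X] [AddCommGroup Y]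
    [Module V Y] [AddCommGroup Z] [Module V Z]
    (f : X →ₗ[V] Y) (g : Y →ₗ[V] Z) (hf : Function.Injective f)
    (hg : Function.Surjective g) (hex : LinearMap.ker g = LinearMap.range f)
    (hX : Module.Projective V X) (hZ : Module.Projective V Z) : Module.Projective V Y := by
  obtain ⟨s, hs⟩ := Module.projective_lifting_property g (LinearMap.id (R := V) (M := Z)) hg
  have : Module.Projective V (X × Z) := inferInstance
  have hb : Function.Bijective (LinearMap.coprod f s) := by
    constructor
    · intro a b hab
      obtain ⟨a1, a2⟩ := a; obtain ⟨b1, b2⟩ := b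
      simp only [LinearMap.coprod_apply] at hab
      have h2 : a2 = b2 := by
        have := congrArg g hab
        have hgf : ∀ x, g (f x) = 0 := by
          intro x
          have : f x ∈ LinearMap.ker g := by rw [hex]; exact ⟨x, rfl⟩
          exact this
        have hgs : ∀ z, g (s z) = z := fun z => by
          simpa using congrArg (fun (h : Z →ₗ[V] Z) => h z) hs
        simp only [map_add, hgf, hgs, zero_add] at this
        exact this
      subst h2
      have : f a1 = f b1 := by simpa using add_right_cancel hab
      have := hf this
      simp [this]
    · intro y
      have hgs : ∀ z, g (s z) = z := fun z => by
        simpa using congrArg (fun (h : Z →ₗ[V] Z) => h z) hs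
      have hy : y - s (g y) ∈ LinearMap.ker g := by
        simp [LinearMap.mem_ker, hgs]
      rw [hex] at hy
      obtain ⟨x, hx⟩ := hy
      exact ⟨(x, g y), by simp [hx]⟩
  exact Module.Projective.of_equiv (LinearEquiv.ofBijective (LinearMap.coprod f s) hb)

/-- Schanuel: if some projective presentation of `Z` has projective kernel, all do. -/
theorem projective_ker_of_surjective {P Q Z : Type*} [AddCommGroup P] [Module V P]
    [AddCommGroup Q] [Module V Q] [AddCommGroup Z] [Module V Z]
    (hP : Module.Projective V P) (hQ : Module.Projective V Q)
    (p : P →ₗ[V] Z) (q : Q →ₗ[V] Z) (hp : Function.Surjective p) (hq : Function.Surjective q)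
    (hkq : Module.Projective V (LinearMap.ker q)) :
    Module.Projective V (LinearMap.ker p) := by
  set d : P × Q →ₗ[V] Z := p.comp (LinearMap.fst V P Q) - q.comp (LinearMap.snd V P Q) with hd
  set D := LinearMap.ker d with hD
  have hdmem : ∀ a b, ((a, b) : P × Q) ∈ D ↔ p a = q b := by
    intro a b
    simp [hD, LinearMap.mem_ker, hd, sub_eq_zero]
  set π1 : D →ₗ[V] P := (LinearMap.fst V P Q).comp D.subtype with hπ1
  have hπ1s : Function.Surjective π1 := fun a => by
    obtain ⟨b, hb⟩ := hq (p a)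
    exact ⟨⟨(a, b), (hdmem a b).mpr hb.symm⟩, rfl⟩
  set π2 : D →ₗ[V] Q := (LinearMap.snd V P Q).comp D.subtype with hπ2
  have hπ2s : Function.Surjective π2 := fun b => by
    obtain ⟨a, ha⟩ := hp (q b)
    exact ⟨⟨(a, b), (hdmem a b).mpr ha⟩, rfl⟩
  have hκmem : ∀ x : LinearMap.ker q, (((0 : P), (x : Q)) : P × Q) ∈ D := by
    rintro ⟨b, hb⟩
    exact (hdmem 0 b).mpr (by simp [show q b = 0 from hb])
  set κ : LinearMap.ker q →ₗ[V] D :=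
    LinearMap.codRestrict D ((LinearMap.inr V P Q).comp (LinearMap.ker q).subtype) hκmem with hκ
  have hκinj : Function.Injective κ := by
    rintro ⟨a, ha⟩ ⟨b, hb⟩ hab
    have : (((0:P), a) : P × Q) = ((0:P), b) := congrArg Subtype.val hab
    exact Subtype.ext (congrArg Prod.snd this)
  have hexκ : LinearMap.ker π1 = LinearMap.range κ := by
    ext x
    obtain ⟨⟨a, b⟩, hab⟩ := x
    constructor
    · intro hx
      have ha0 : a = 0 := hx
      subst ha0
      have hb : q b = 0 := by
        have := (hdmem 0 b).mp hab
        simpa using this.symm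
      exact ⟨⟨b, hb⟩, rfl⟩
    · rintro ⟨⟨c, hc⟩, hx⟩
      rw [← hx]
      show π1 (κ ⟨c, hc⟩) = 0
      rfl
  have hDproj : Module.Projective V D := projective_of_ses κ π1 hκinj hπ1s hexκ hkq hP
  obtain ⟨s2, hs2⟩ := Module.projective_lifting_property π2 (LinearMap.id (R := V) (M := Q)) hπ2s
  have hs2app : ∀ b, π2 (s2 b) = b := fun b =>
    congrArg (fun (h : Q →ₗ[V] Q) => h b) hs2
  have hrmem : ∀ x : D, x - s2 (π2 x) ∈ LinearMap.ker π2 := by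
    intro x
    simp [LinearMap.mem_ker, hs2app]
  set r : D →ₗ[V] LinearMap.ker π2 :=
    LinearMap.codRestrict (LinearMap.ker π2) (LinearMap.id - s2.comp π2) hrmem with hr
  have hkπ2 : Module.Projective V (LinearMap.ker π2) := by
    refine Module.Projective.of_split (LinearMap.ker π2).subtype r ?_
    apply LinearMap.ext
    rintro ⟨y, hy⟩
    apply Subtype.ext
    show (y : D) - s2 (π2 y) = y
    rw [show π2 y = 0 from hy]
    simp
  have hemem : ∀ x : LinearMap.ker π2, ((x : D) : P × Q).1 ∈ LinearMap.ker p := by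
    rintro ⟨⟨⟨a, b⟩, hab⟩, hb⟩
    have hb0 : b = 0 := hb
    subst hb0
    have : p a = q 0 := (hdmem a 0).mp hab
    simpa using this
  set e : LinearMap.ker π2 →ₗ[V] LinearMap.ker p :=
    LinearMap.codRestrict (LinearMap.ker p)
      ((LinearMap.fst V P Q).comp (D.subtype.comp (LinearMap.ker π2).subtype)) hemem with he
  have hebij : Function.Bijective e := by
    constructor
    · rintro ⟨⟨⟨a1, b1⟩, h1⟩, hb1⟩ ⟨⟨⟨a2, b2⟩, h2⟩, hb2⟩ hab
      have ha : a1 = a2 := congrArg Subtype.val hab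
      have hb : b1 = b2 := by
        have e1 : b1 = 0 := hb1
        have e2 : b2 = 0 := hb2
        rw [e1, e2]
      apply Subtype.ext; apply Subtype.ext
      exact Prod.ext ha hb
    · rintro ⟨a, ha⟩
      refine ⟨⟨⟨(a, 0), (hdmem a 0).mpr (by simp [show p a = 0 from ha])⟩, rfl⟩, rfl⟩
  exact Module.Projective.of_equiv (LinearEquiv.ofBijective e hebij)

variable {X Y Z : Type v}
  [AddCommGroup X] [Module V X] [AddCommGroup Y] [Module V Y] [AddCommGroup Z] [Module V Z]

theorem PdLeOne.of_equiv (e : X ≃ₗ[V] Y) (h : PdLeOne V X) : PdLeOne V Y := by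
  obtain ⟨P, _, _, f, hP, hfs, hker⟩ := h
  refine ⟨P, _, _, e.toLinearMap.comp f, hP, e.surjective.comp hfs, ?_⟩
  have : LinearMap.ker (e.toLinearMap.comp f) = LinearMap.ker f := by
    rw [LinearMap.ker_comp, LinearEquiv.ker, Submodule.comap_bot]
  rw [this]
  exact hker

/-- Horseshoe lemma for pd ≤ 1. -/
theorem PdLeOne.of_ses (f : X →ₗ[V] Y) (g : Y →ₗ[V] Z) (hf : Function.Injective f)
    (hg : Function.Surjective g) (hex : LinearMap.ker g = LinearMap.range f)
    (hX : PdLeOne V X) (hZ : PdLeOne V Z) : PdLeOne V Y := by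
  obtain ⟨P, _, _, p, hP, hps, hkp⟩ := hX
  obtain ⟨Q, _, _, q, hQ, hqs, hkq⟩ := hZ
  obtain ⟨q', hq'⟩ := Module.projective_lifting_property g q hg
  have hq'app : ∀ b, g (q' b) = q b := fun b =>
    congrArg (fun (h : Q →ₗ[V] Z) => h b) hq'
  have hgf : ∀ x, g (f x) = 0 := by
    intro x
    have : f x ∈ LinearMap.ker g := by rw [hex]; exact ⟨x, rfl⟩
    exact this
  set h : P × Q →ₗ[V] Y := LinearMap.coprod (f.comp p) q' with hh
  have hhs : Function.Surjective h := by
    intro y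
    obtain ⟨b, hb⟩ := hqs (g y)
    have : y - q' b ∈ LinearMap.ker g := by
      simp [LinearMap.mem_ker, hq'app, hb]
    rw [hex] at this
    obtain ⟨x, hx⟩ := this
    obtain ⟨a, ha⟩ := hps x
    exact ⟨(a, b), by simp [hh, ha, hx]⟩
  refine ⟨P × Q, _, _, h, inferInstance, hhs, ?_⟩
  set K := LinearMap.ker h with hK
  have hmem : ∀ x : K, (x.1.2 : Q) ∈ LinearMap.ker q := by
    rintro ⟨⟨a, b⟩, hab⟩
    have : g (h (a, b)) = 0 := by rw [show h (a,b) = 0 from hab]; simp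
    simp only [hh, LinearMap.coprod_apply, LinearMap.comp_apply, map_add, hgf, hq'app,
      zero_add] at this
    exact this
  set π : K →ₗ[V] LinearMap.ker q :=
    LinearMap.codRestrict (LinearMap.ker q)
      ((LinearMap.snd V P Q).comp K.subtype) hmem with hπ
  have hπs : Function.Surjective π := by
    rintro ⟨b, hb⟩
    have : q' b ∈ LinearMap.ker g := by
      simp only [LinearMap.mem_ker, hq'app]
      exact hb
    rw [hex] at this
    obtain ⟨x, hx⟩ := this
    obtain ⟨a, ha⟩ := hps (-x)
    refine ⟨⟨(a, b), ?_⟩, rfl⟩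
    show h (a, b) = 0
    simp only [hh, LinearMap.coprod_apply, LinearMap.comp_apply, ha, map_neg, hx]
    simp
  have hincl : ∀ x : LinearMap.ker p, (((x : P), (0 : Q)) : P × Q) ∈ K := by
    rintro ⟨a, ha⟩
    show h (a, 0) = 0
    simp [hh, show p a = 0 from ha]
  set ι : LinearMap.ker p →ₗ[V] K :=
    LinearMap.codRestrict K ((LinearMap.inl V P Q).comp (LinearMap.ker p).subtype) hincl with hι
  have hιinj : Function.Injective ι := by
    rintro ⟨a, ha⟩ ⟨b, hb⟩ hab
    have : ((a, (0:Q)) : P × Q) = (b, 0) := congrArg Subtype.val hab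
    exact Subtype.ext (congrArg Prod.fst this)
  have hexk : LinearMap.ker π = LinearMap.range ι := by
    ext x
    obtain ⟨⟨a, b⟩, hab⟩ := x
    constructor
    · intro hx
      have hb0 : b = 0 := congrArg Subtype.val hx
      subst hb0
      have hpa : p a ∈ LinearMap.ker f := by
        have : h (a, 0) = 0 := hab
        simp only [hh, LinearMap.coprod_apply, LinearMap.comp_apply, map_zero, add_zero] at this
        exact this
      have hpa0 : p a = 0 := by
        have := hpa
        rw [LinearMap.ker_eq_bot.mpr hf] at this
        exact this
      exact ⟨⟨a, hpa0⟩, rfl⟩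
    · rintro ⟨⟨c, hc⟩, hx⟩
      rw [← hx]
      show π (ι ⟨c, hc⟩) = 0
      apply Subtype.ext
      rfl
  exact projective_of_ses ι π hιinj hπs hexk hkp hkq

/-- In a SES `0 → X → Y → Z → 0`, if `pd Y ≤ 1` and `pd Z ≤ 1` then `pd X ≤ 1`. -/
theorem PdLeOne.ker_of (f : X →ₗ[V] Y) (g : Y →ₗ[V] Z) (hf : Function.Injective f)
    (hg : Function.Surjective g) (hex : LinearMap.ker g = LinearMap.range f)
    (hY : PdLeOne V Y) (hZ : PdLeOne V Z) : PdLeOne V X := by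
  obtain ⟨P, _, _, p, hP, hps, hkp⟩ := hY
  obtain ⟨Q, _, _, q, hQ, hqs, hkq⟩ := hZ
  set t : P →ₗ[V] Z := g.comp p with ht
  have hts : Function.Surjective t := hg.comp hps
  have hL : Module.Projective V (LinearMap.ker t) :=
    projective_ker_of_surjective hP hQ t q hts hqs hkq
  have hmem : ∀ x : LinearMap.ker t, p (x : P) ∈ LinearMap.range f := by
    rintro ⟨a, ha⟩
    have : p a ∈ LinearMap.ker g := ha
    rwa [hex] at this
  set e := LinearEquiv.ofInjective f hf with he
  set c : LinearMap.ker t →ₗ[V] LinearMap.range f :=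
    LinearMap.codRestrict (LinearMap.range f) (p.comp (LinearMap.ker t).subtype) hmem with hc
  set lam : LinearMap.ker t →ₗ[V] X := e.symm.toLinearMap.comp c with hlam
  have hcval : ∀ x : LinearMap.ker t, ((c x : Y)) = p (x : P) := fun x => rfl
  have hfe : ∀ x : X, ((e x : Y)) = f x := fun x => rfl
  have hlams : Function.Surjective lam := by
    intro x
    obtain ⟨a, ha⟩ := hps (f x)
    have hat : a ∈ LinearMap.ker t := by
      show g (p a) = 0
      rw [ha]
      have : f x ∈ LinearMap.ker g := by rw [hex]; exact ⟨x, rfl⟩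
      exact this
    refine ⟨⟨a, hat⟩, ?_⟩
    have hceq : c ⟨a, hat⟩ = e x := by
      apply Subtype.ext
      rw [hcval, hfe]
      exact ha
    show e.symm (c ⟨a, hat⟩) = x
    rw [hceq, LinearEquiv.symm_apply_apply]
  have hkermem : ∀ x : LinearMap.ker lam, (((x : LinearMap.ker t) : P)) ∈ LinearMap.ker p := by
    rintro ⟨⟨a, ha⟩, hl⟩
    have h0 : e.symm (c ⟨a, ha⟩) = 0 := hl
    have : c ⟨a, ha⟩ = 0 := by
      have := congrArg e h0
      rwa [LinearEquiv.apply_symm_apply, map_zero] at this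
    have : p a = 0 := by
      have := congrArg Subtype.val this
      rwa [hcval] at this
    exact this
  set e2 : LinearMap.ker lam →ₗ[V] LinearMap.ker p :=
    LinearMap.codRestrict (LinearMap.ker p)
      ((LinearMap.ker t).subtype.comp (LinearMap.ker lam).subtype) hkermem with he2
  have he2bij : Function.Bijective e2 := by
    constructor
    · rintro ⟨⟨a1, h1⟩, hl1⟩ ⟨⟨a2, h2⟩, hl2⟩ hab
      apply Subtype.ext; apply Subtype.ext
      have h3 : (e2 ⟨⟨a1, h1⟩, hl1⟩ : P) = (e2 ⟨⟨a2, h2⟩, hl2⟩ : P) := congrArg Subtype.val hab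
      exact h3
    · rintro ⟨a, ha⟩
      have hat : a ∈ LinearMap.ker t := by
        show g (p a) = 0
        rw [show p a = 0 from ha]
        simp
      have hl : (⟨a, hat⟩ : LinearMap.ker t) ∈ LinearMap.ker lam := by
        show e.symm (c ⟨a, hat⟩) = 0
        have : c ⟨a, hat⟩ = 0 := by
          apply Subtype.ext
          rw [hcval]
          exact ha
        rw [this, map_zero]
      exact ⟨⟨⟨a, hat⟩, hl⟩, rfl⟩
  exact ⟨LinearMap.ker t, _, _, lam, hL, hlams,
    Module.Projective.of_equiv (LinearEquiv.ofBijective e2 he2bij).symm⟩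

end Abstract

section Quot
variable {V : Type u} [CommRing V] {M : Type v} [AddCommGroup M] [Module V M]

/-- For `N ≤ N'` the SES `0 → N'/N → M/N → M/N' → 0`. -/
theorem ses_quot (N N' : Submodule V M) (h : N ≤ N') :
    ∃ (f : (↥N' ⧸ N.comap N'.subtype) →ₗ[V] (M ⧸ N)) (g : (M ⧸ N) →ₗ[V] (M ⧸ N')),
      Function.Injective f ∧ Function.Surjective g ∧ LinearMap.ker g = LinearMap.range f := by
  refine ⟨Submodule.mapQ (N.comap N'.subtype) N N'.subtype le_rfl,
    Submodule.mapQ N N' LinearMap.id (by simpa using h), ?_, ?_, ?_⟩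
  · rw [← LinearMap.ker_eq_bot]
    ext x
    induction x using Submodule.Quotient.induction_on with
    | H x =>
      simp only [LinearMap.mem_ker, Submodule.mapQ_apply, Submodule.mem_bot,
        Submodule.Quotient.mk_eq_zero, Submodule.mem_comap]
  · intro z
    obtain ⟨m, rfl⟩ := Submodule.mkQ_surjective N' z
    exact ⟨Submodule.Quotient.mk m, by simp [Submodule.mapQ_apply]⟩
  · ext y
    induction y using Submodule.Quotient.induction_on with
    | H m =>
      simp only [LinearMap.mem_ker, Submodule.mapQ_apply, LinearMap.id_apply,
        Submodule.Quotient.mk_eq_zero, LinearMap.mem_range]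
      constructor
      · intro hm
        exact ⟨Submodule.Quotient.mk ⟨m, hm⟩, by simp [Submodule.mapQ_apply]⟩
      · rintro ⟨x, hx⟩
        induction x using Submodule.Quotient.induction_on with
        | H n =>
          rw [Submodule.mapQ_apply] at hx
          have : (n : M) - m ∈ N := (Submodule.Quotient.eq N).mp hx
          have : m = (n : M) - ((n : M) - m) := (sub_sub_cancel _ _).symm
          rw [this]
          exact N'.sub_mem n.2 (h ‹(n : M) - m ∈ N›)
end Quot

section TightLemmas
variable {V : Type u} [CommRing V] {M : Type v} [AddCommGroup M] [Module V M]

theorem tight_of_tightIn (N N' : Submodule V M) (h : N ≤ N')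
    (hN' : Tight V N') (hNN' : TightIn V N N') : Tight V N := by
  obtain ⟨f, g, hf, hg, hex⟩ := ses_quot N N' h
  exact PdLeOne.of_ses f g hf hg hex hNN' hN'

theorem tightIn_of_tight (N N' : Submodule V M) (h : N ≤ N')
    (hN : Tight V N) (hN' : Tight V N') : TightIn V N N' := by
  obtain ⟨f, g, hf, hg, hex⟩ := ses_quot N N' h
  exact PdLeOne.ker_of f g hf hg hex hN hN'

theorem tightIn_inf_iff_sup (A B : Submodule V M) :
    TightIn V (A ⊓ B) A ↔ TightIn V B (A ⊔ B) :=
  ⟨fun h => PdLeOne.of_equiv (LinearMap.quotientInfEquivSupQuotient A B) h,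
   fun h => PdLeOne.of_equiv (LinearMap.quotientInfEquivSupQuotient A B).symm h⟩

theorem tightIn_comap_iff (N N' W : Submodule V M) (hN : N ≤ N') (h' : N' ≤ W) :
    TightIn V N N' ↔
      Tight V ((N.comap W.subtype).comap (N'.comap W.subtype).subtype) := by
  set e : (↥(N'.comap W.subtype)) ≃ₗ[V] ↥N' := Submodule.comapSubtypeEquivOfLe h' with he
  have hmap : ((N.comap W.subtype).comap (N'.comap W.subtype).subtype).map (e : ↥(N'.comap W.subtype) →ₗ[V] ↥N')
      = N.comap N'.subtype := by
    ext x
    constructor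
    · rintro ⟨y, hy, rfl⟩
      exact hy
    · intro hx
      refine ⟨⟨⟨(x : M), h' x.2⟩, x.2⟩, hx, ?_⟩
      apply Subtype.ext
      rfl
  exact ⟨fun h => PdLeOne.of_equiv (Submodule.Quotient.equiv _ _ e hmap).symm h,
         fun h => PdLeOne.of_equiv (Submodule.Quotient.equiv _ _ e hmap) h⟩

theorem vi_aux (A B : Submodule V M) (h1 : TightIn V (A ⊓ B) A)
    (h3 : TightIn V A (A ⊔ B)) : TightIn V (A ⊓ B) (A ⊔ B) := by
  have h' := (tightIn_comap_iff (A ⊓ B) A (A ⊔ B) inf_le_left le_sup_left).mp h1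
  exact tight_of_tightIn ((A ⊓ B).comap (A ⊔ B).subtype) (A.comap (A ⊔ B).subtype)
    (Submodule.comap_mono inf_le_left) h3 h'

end TightLemmas

/-- relations among tightness conditions for two tight submodules. -/
theorem statement1 (V : Type u) [CommRing V] [IsDomain V] [ValuationRing V]
    (M : Type v) [AddCommGroup M] [Module V M] (hM : PdLeOne V M)
    (A B : Submodule V M) (hA : Tight V A) (hB : Tight V B) :
    -- (i)-(v) are pairwise equivalent
    ((TightIn V (A ⊓ B) A ↔ TightIn V (A ⊓ B) B) ∧
     (TightIn V (A ⊓ B) B ↔ TightIn V A (A ⊔ B)) ∧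
     (TightIn V A (A ⊔ B) ↔ TightIn V B (A ⊔ B)) ∧
     (TightIn V B (A ⊔ B) ↔ Tight V (A ⊓ B))) ∧
    -- each of (i)-(v) implies (vi)
    ((TightIn V (A ⊓ B) A → TightIn V (A ⊓ B) (A ⊔ B)) ∧
     (TightIn V (A ⊓ B) B → TightIn V (A ⊓ B) (A ⊔ B)) ∧
     (TightIn V A (A ⊔ B) → TightIn V (A ⊓ B) (A ⊔ B)) ∧
     (TightIn V B (A ⊔ B) → TightIn V (A ⊓ B) (A ⊔ B)) ∧
     (Tight V (A ⊓ B) → TightIn V (A ⊓ B) (A ⊔ B))) ∧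
    -- (vii) implies each of (i)-(v)
    ((Tight V (A ⊔ B) → TightIn V (A ⊓ B) A) ∧
     (Tight V (A ⊔ B) → TightIn V (A ⊓ B) B) ∧
     (Tight V (A ⊔ B) → TightIn V A (A ⊔ B)) ∧
     (Tight V (A ⊔ B) → TightIn V B (A ⊔ B)) ∧
     (Tight V (A ⊔ B) → Tight V (A ⊓ B))) := by
  have i_iv : TightIn V (A ⊓ B) A ↔ TightIn V B (A ⊔ B) := tightIn_inf_iff_sup A B
  have ii_iii : TightIn V (A ⊓ B) B ↔ TightIn V A (A ⊔ B) := by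
    have h := tightIn_inf_iff_sup B A
    rwa [inf_comm B A, sup_comm B A] at h
  have i_v : TightIn V (A ⊓ B) A ↔ Tight V (A ⊓ B) :=
    ⟨fun h => tight_of_tightIn _ _ inf_le_left hA h,
     fun h => tightIn_of_tight _ _ inf_le_left h hA⟩
  have ii_v : TightIn V (A ⊓ B) B ↔ Tight V (A ⊓ B) :=
    ⟨fun h => tight_of_tightIn _ _ inf_le_right hB h,
     fun h => tightIn_of_tight _ _ inf_le_right h hB⟩
  have i_ii : TightIn V (A ⊓ B) A ↔ TightIn V (A ⊓ B) B := i_v.trans ii_v.symm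
  have iii_iv : TightIn V A (A ⊔ B) ↔ TightIn V B (A ⊔ B) :=
    ii_iii.symm.trans (i_ii.symm.trans i_iv)
  have iv_v : TightIn V B (A ⊔ B) ↔ Tight V (A ⊓ B) := i_iv.symm.trans i_v
  have h_vi : TightIn V (A ⊓ B) A → TightIn V (A ⊓ B) (A ⊔ B) := fun h =>
    vi_aux A B h (ii_iii.mp (i_ii.mp h))
  have vii_iv : Tight V (A ⊔ B) → TightIn V B (A ⊔ B) := fun h =>
    tightIn_of_tight _ _ le_sup_right hB h
  exact ⟨⟨i_ii, ii_iii, iii_iv, iv_v⟩,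
    ⟨h_vi, fun h => h_vi (i_ii.mpr h), fun h => h_vi (i_ii.mpr (ii_iii.mpr h)),
     fun h => h_vi (i_iv.mpr h), fun h => h_vi (i_v.mpr h)⟩,
    ⟨fun h => i_iv.mpr (vii_iv h), fun h => i_ii.mp (i_iv.mpr (vii_iv h)),
     fun h => iii_iv.mpr (vii_iv h), vii_iv, fun h => iv_v.mp (vii_iv h)⟩⟩
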